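/- Let p be a prime and x, y, z ∈ ℚ_p with y ≠ 0, z ≠ 0 and xz − y² ≠ 0. Set n = [[1,0,x,y],[0,1,y,z],[0,0,1,0],[0,0,0,1]] and σ = s₂s₁s₂. Then σ·n ∈ P_S(ℚ_p)·s₂·B(p) if and only if v_p(x) ≤ min{−1, v_p(y) − 1, v_p(xz − y²)}. Moreover, in that case, whenever σ·n = q·s₂·γ with q ∈ P_S(ℚ_p) and γ ∈ B(p), one has m₂(q) ∈ [[0, 1],[x⁻¹, −y/x]]·Γ₀(p). -/

import Mathlib

open Matrix

/-- The standard symplectic similitude matrix `J`. -/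
noncomputable def J4 (p : ℕ) [Fact p.Prime] : Matrix (Fin 4) (Fin 4) ℚ_[p] :=
  !![0, 0, 1, 0; 0, 0, 0, 1; -1, 0, 0, 0; 0, -1, 0, 0]

/-- `GSp₄(ℚ_p)`: invertible 4×4 matrices `g` with `gᵀ·J·g = μ·J` for some `μ ≠ 0`. -/
def GSp4 (p : ℕ) [Fact p.Prime] : Set (Matrix (Fin 4) (Fin 4) ℚ_[p]) :=
  {g | g.det ≠ 0 ∧ ∃ μ : ℚ_[p], μ ≠ 0 ∧ gᵀ * J4 p * g = μ • J4 p}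

/-- The congruence subgroup `B(p)` of `GSp₄(ℤ_p)`: all entries in `ℤ_p`, similitude factor a
unit, and the entries at positions (2,1), (3,1), (4,1), (3,2), (4,2), (3,4) in `pℤ_p`. -/
def Bp (p : ℕ) [Fact p.Prime] : Set (Matrix (Fin 4) (Fin 4) ℚ_[p]) :=
  {g | (∀ i j, ‖g i j‖ ≤ 1) ∧ (∃ μ : ℚ_[p], ‖μ‖ = 1 ∧ gᵀ * J4 p * g = μ • J4 p) ∧
    ‖g 1 0‖ ≤ (p : ℝ)⁻¹ ∧ ‖g 2 0‖ ≤ (p : ℝ)⁻¹ ∧ ‖g 3 0‖ ≤ (p : ℝ)⁻¹ ∧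
    ‖g 2 1‖ ≤ (p : ℝ)⁻¹ ∧ ‖g 3 1‖ ≤ (p : ℝ)⁻¹ ∧ ‖g 2 3‖ ≤ (p : ℝ)⁻¹}

/-- The Siegel parabolic `P_S(ℚ_p)`: entries at positions (3,1), (3,2), (4,1), (4,2)
vanish. -/
def PS (p : ℕ) [Fact p.Prime] : Set (Matrix (Fin 4) (Fin 4) ℚ_[p]) :=
  {g | g ∈ GSp4 p ∧ g 2 0 = 0 ∧ g 2 1 = 0 ∧ g 3 0 = 0 ∧ g 3 1 = 0}

/-- The upper-left `GL₂`-block `m₂(q)` of an element of the Siegel parabolic. -/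
def m2S (p : ℕ) [Fact p.Prime] (q : Matrix (Fin 4) (Fin 4) ℚ_[p]) :
    Matrix (Fin 2) (Fin 2) ℚ_[p] :=
  !![q 0 0, q 0 1; q 1 0, q 1 1]

/-- `Γ₀(p) = {γ ∈ GL₂(ℤ_p) : γ₂₁ ∈ pℤ_p}`. -/
def Gamma0 (p : ℕ) [Fact p.Prime] : Set (Matrix (Fin 2) (Fin 2) ℚ_[p]) :=
  {γ | (∀ i j, ‖γ i j‖ ≤ 1) ∧ ‖γ.det‖ = 1 ∧ ‖γ 1 0‖ ≤ (p : ℝ)⁻¹}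

/-- The Weyl element `s₁`. -/
noncomputable def s1 (p : ℕ) [Fact p.Prime] : Matrix (Fin 4) (Fin 4) ℚ_[p] :=
  !![0, 1, 0, 0; 1, 0, 0, 0; 0, 0, 0, 1; 0, 0, 1, 0]

/-- The Weyl element `s₂`. -/
noncomputable def s2 (p : ℕ) [Fact p.Prime] : Matrix (Fin 4) (Fin 4) ℚ_[p] :=
  !![1, 0, 0, 0; 0, 0, 0, 1; 0, 0, 1, 0; 0, -1, 0, 0]

/-- The unipotent matrix `n` attached to `(x, y, z)` (Siegel setting). -/
noncomputable def nS (p : ℕ) [Fact p.Prime] (x y z : ℚ_[p]) : Matrix (Fin 4) (Fin 4) ℚ_[p] :=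
  !![1, 0, x, y; 0, 1, y, z; 0, 0, 1, 0; 0, 0, 0, 1]

/-! Write `γ⁻¹ = μ⁻¹ · (−J γᵀ J)`, `μ` the similitude factor of `γ`. Since the lower-left block
of `q` vanishes, `σ·n·γ⁻¹ = q·s₂` forces rows 1 and 2 of `γ` (indices from 0) to satisfy
`(γᵢ₂, γᵢ₃) = (γᵢ₀, γᵢ₁)·[[x, y], [y, z]]`, and identifies `μ·m₂(q)` with
`[[−γ₂₁, γ₁₁], [−γ₂₀, γ₁₀]]`. For `γ ∈ B(p)` the symplectic relations make `γ₁₁`, `γ₂₂` and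
the minor `γ₁₁γ₂₂ − γ₁₂γ₂₁` units, and this minor equals `x·(γ₁₁γ₂₀ − γ₁₀γ₂₁)` with the second
factor in `pℤ_p`. Hence `|x| ≥ p`; then `yγ₁₁ = γ₁₂ − xγ₁₀` gives `|y| ≤ |x|/p`, and
`(xz − y²)(γ₁₁γ₂₀ − γ₁₀γ₂₁) = γ₂₂γ₁₃ − γ₁₂γ₂₃` gives `|xz − y²| ≤ |x|`. Conversely, under these
bounds an explicit factorization exists.
-/

theorem norm_mul_le_of_le_of_norm_le_one {R : Type*} [NonUnitalSeminormedRing R] {a b : R}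
    {r : ℝ} (ha : ‖a‖ ≤ r) (hb : ‖b‖ ≤ 1) : ‖a * b‖ ≤ r := by
  simpa using norm_mul_le_of_le ha hb

theorem norm_mul_le_of_norm_le_one_of_le {R : Type*} [NonUnitalSeminormedRing R] {a b : R}
    {r : ℝ} (ha : ‖a‖ ≤ 1) (hb : ‖b‖ ≤ r) : ‖a * b‖ ≤ r := by
  simpa using norm_mul_le_of_le ha hb

namespace IsUltrametricDist

section Group

variable {S : Type*} [SeminormedAddGroup S] [IsUltrametricDist S] {a b : S} {r : ℝ}

theorem norm_add_le_of_le (ha : ‖a‖ ≤ r) (hb : ‖b‖ ≤ r) : ‖a + b‖ ≤ r :=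
  (norm_add_le_max a b).trans (max_le ha hb)

theorem norm_sub_le_of_le (ha : ‖a‖ ≤ r) (hb : ‖b‖ ≤ r) : ‖a - b‖ ≤ r := by
  rw [sub_eq_add_neg]
  exact norm_add_le_of_le ha (by rwa [norm_neg])

theorem norm_add_eq_left_of_lt (h : ‖b‖ < ‖a‖) : ‖a + b‖ = ‖a‖ := by
  rw [norm_add_eq_max_of_norm_ne_norm h.ne', max_eq_left h.le]

end Group

theorem norm_eq_one_of_mul_eq_add {R : Type*} [NonUnitalSeminormedRing R] [IsUltrametricDist R]
    {a b u s : R} (ha : ‖a‖ ≤ 1) (hb : ‖b‖ ≤ 1) (hu : ‖u‖ = 1) (hs : ‖s‖ < 1)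
    (h : a * b = u + s) : ‖a‖ = 1 := by
  refine ha.antisymm ?_
  calc 1 = ‖a * b‖ := by rw [h, norm_add_eq_left_of_lt (hu ▸ hs), hu]
    _ ≤ ‖a‖ := norm_mul_le_of_le_of_norm_le_one le_rfl hb

end IsUltrametricDist

open IsUltrametricDist

namespace Padic

variable {p : ℕ} [Fact p.Prime]

theorem addValuation_le_addValuation_iff (a b : ℚ_[p]) :
    addValuation a ≤ addValuation b ↔ ‖b‖ ≤ ‖a‖ := by
  rcases eq_or_ne b 0 with rfl | hb
  · simp
  rcases eq_or_ne a 0 with rfl | ha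
  · simp [hb]
  have hp : (1 : ℝ) < p := mod_cast (Fact.out : p.Prime).one_lt
  rw [addValuation.apply ha, addValuation.apply hb, norm_eq_zpow_neg_valuation ha,
    norm_eq_zpow_neg_valuation hb, zpow_le_zpow_iff_right₀ hp, neg_le_neg_iff,
    WithTop.coe_le_coe]

theorem addValuation_natCast_inv : addValuation (p⁻¹ : ℚ_[p]) = ((-1 : ℤ) : WithTop ℤ) := by
  rw [AddValuation.map_inv,
    addValuation.apply (Nat.cast_ne_zero.mpr (Fact.out : p.Prime).ne_zero), valuation_p]
  rfl

theorem addValuation_sub_one (a : ℚ_[p]) :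
    addValuation a - 1 = addValuation ((p : ℚ_[p])⁻¹ * a) := by
  rw [_root_.AddValuation.map_mul, addValuation_natCast_inv, sub_eq_add_neg, add_comm]
  rfl

theorem addValuation_le_min_iff (x y w : ℚ_[p]) :
    addValuation x ≤ min ((-1 : ℤ) : WithTop ℤ) (min (addValuation y - 1) (addValuation w)) ↔
      (p : ℝ) ≤ ‖x‖ ∧ (p : ℝ) * ‖y‖ ≤ ‖x‖ ∧ ‖w‖ ≤ ‖x‖ := by
  rw [← addValuation_natCast_inv (p := p), addValuation_sub_one, le_min_iff, le_min_iff,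
    addValuation_le_addValuation_iff, addValuation_le_addValuation_iff,
    addValuation_le_addValuation_iff, norm_mul, norm_inv, norm_p, inv_inv]

theorem natCast_inv_lt_one : (p : ℝ)⁻¹ < 1 :=
  inv_lt_one_of_one_lt₀ (mod_cast (Fact.out : p.Prime).one_lt)

end Padic

section

variable {p : ℕ} [Fact p.Prime]

theorem J4_mul_J4 : J4 p * J4 p = -1 := by
  ext i j
  fin_cases i <;> fin_cases j <;> simp [J4, Matrix.mul_apply, Fin.sum_univ_four]

noncomputable def similitudeAdj (g : Matrix (Fin 4) (Fin 4) ℚ_[p]) :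
    Matrix (Fin 4) (Fin 4) ℚ_[p] :=
  -J4 p * gᵀ * J4 p

theorem similitudeAdj_eq (g : Matrix (Fin 4) (Fin 4) ℚ_[p]) :
    similitudeAdj g = !![g 2 2, g 3 2, -g 0 2, -g 1 2; g 2 3, g 3 3, -g 0 3, -g 1 3;
      -g 2 0, -g 3 0, g 0 0, g 1 0; -g 2 1, -g 3 1, g 0 1, g 1 1] := by
  ext i j
  fin_cases i <;> fin_cases j <;>
    simp [similitudeAdj, J4, Matrix.mul_apply, Matrix.vecMul, dotProduct, Fin.sum_univ_four]

section Similitude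

variable {g : Matrix (Fin 4) (Fin 4) ℚ_[p]} {μ : ℚ_[p]}

theorem similitudeAdj_mul (h : gᵀ * J4 p * g = μ • J4 p) : similitudeAdj g * g = μ • 1 := by
  rw [similitudeAdj, Matrix.mul_assoc, Matrix.mul_assoc, ← Matrix.mul_assoc gᵀ, h,
    Matrix.mul_smul, neg_mul, J4_mul_J4, neg_neg]

theorem inv_smul_similitudeAdj_mul (hμ : μ ≠ 0) (h : gᵀ * J4 p * g = μ • J4 p) :
    (μ⁻¹ • similitudeAdj g) * g = 1 := by
  rw [smul_mul_assoc, similitudeAdj_mul h, smul_smul, inv_mul_cancel₀ hμ, one_smul]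

theorem mul_similitudeAdj (hμ : μ ≠ 0) (h : gᵀ * J4 p * g = μ • J4 p) :
    g * similitudeAdj g = μ • 1 := by
  have := inv_smul_similitudeAdj_mul hμ h
  rw [mul_eq_one_comm, Matrix.mul_smul] at this
  rw [← this, smul_smul, mul_inv_cancel₀ hμ, one_smul]

theorem mem_GSp4_of_similitude (hμ : μ ≠ 0) (h : gᵀ * J4 p * g = μ • J4 p) : g ∈ GSp4 p :=
  ⟨Matrix.det_ne_zero_of_left_inverse (inv_smul_similitudeAdj_mul hμ h), μ, hμ, h⟩

theorem similitude_diag_entries (h : gᵀ * J4 p * g = μ • J4 p) :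
    g 1 1 * g 3 3 = μ + (g 2 1 * g 0 3 + g 3 1 * g 1 3 - g 0 1 * g 2 3) ∧
    g 2 2 * g 0 0 = μ + (g 2 0 * g 0 2 + g 3 0 * g 1 2 - g 1 0 * g 3 2) := by
  have E := fun i j => congrFun (congrFun h i) j
  have e13 := E 1 3
  have e02 := E 0 2
  simp [J4, Matrix.mul_apply, Fin.sum_univ_four] at e13 e02
  exact ⟨by linear_combination e13, by linear_combination e02⟩

end Similitude

theorem s2_mul_s1_mul_s2_mul_nS (x y z : ℚ_[p]) :
    s2 p * s1 p * s2 p * nS p x y z =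
      !![0, 0, 0, 1; 0, 0, 1, 0; 0, -1, -y, -z; -1, 0, -x, -y] := by
  ext i j
  fin_cases i <;> fin_cases j <;> simp [s1, s2, nS, Matrix.mul_apply, Fin.sum_univ_four]

theorem factorization_relations {x y z μ : ℚ_[p]} {q γ : Matrix (Fin 4) (Fin 4) ℚ_[p]}
    (hμ : μ ≠ 0) (hγ : γᵀ * J4 p * γ = μ • J4 p)
    (hfac : s2 p * s1 p * s2 p * nS p x y z = q * (s2 p * γ))
    (hq : q 2 0 = 0 ∧ q 2 1 = 0 ∧ q 3 0 = 0 ∧ q 3 1 = 0) :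
    (γ 1 2 = x * γ 1 0 + y * γ 1 1 ∧ γ 2 2 = x * γ 2 0 + y * γ 2 1 ∧
      γ 1 3 = y * γ 1 0 + z * γ 1 1 ∧ γ 2 3 = y * γ 2 0 + z * γ 2 1) ∧
    μ • m2S p q = !![-γ 2 1, γ 1 1; -γ 2 0, γ 1 0] := by
  have key : μ • (q * s2 p) =
      !![0, 0, 0, 1; 0, 0, 1, 0; 0, -1, -y, -z; -1, 0, -x, -y] * similitudeAdj γ := by
    rw [← s2_mul_s1_mul_s2_mul_nS, hfac, Matrix.mul_assoc, Matrix.mul_assoc,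
      mul_similitudeAdj hμ hγ, Matrix.mul_smul, Matrix.mul_one, Matrix.mul_smul]
  have E := fun i j => congrFun (congrFun key i) j
  obtain ⟨h20, h21, h30, h31⟩ := hq
  have r20 := E 2 0
  have r23 := E 2 3
  have r30 := E 3 0
  have r33 := E 3 3
  have m00 := E 0 0
  have m03 := E 0 3
  have m10 := E 1 0
  have m13 := E 1 3
  simp [similitudeAdj_eq, s2, Matrix.mul_apply, Fin.sum_univ_four, h20, h21, h30, h31]
    at r20 r23 r30 r33 m00 m03 m10 m13
  refine ⟨⟨by linear_combination -r33, by linear_combination r30, by linear_combination -r23,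
    by linear_combination r20⟩, ?_⟩
  ext i j
  fin_cases i <;> fin_cases j <;> simpa [m2S]

namespace Bp

variable {γ : Matrix (Fin 4) (Fin 4) ℚ_[p]}

theorem norm_apply_one_one (hγ : γ ∈ Bp p) : ‖γ 1 1‖ = 1 := by
  obtain ⟨hint, ⟨μ, hμ, hrel⟩, -, -, -, h21, h31, h23⟩ := hγ
  refine norm_eq_one_of_mul_eq_add (hint 1 1) (hint 3 3) hμ ?_ (similitude_diag_entries hrel).1
  refine lt_of_le_of_lt ?_ (Padic.natCast_inv_lt_one (p := p))
  exact norm_sub_le_of_le (norm_add_le_of_le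
    (norm_mul_le_of_le_of_norm_le_one h21 (hint 0 3))
    (norm_mul_le_of_le_of_norm_le_one h31 (hint 1 3)))
    (norm_mul_le_of_norm_le_one_of_le (hint 0 1) h23)

theorem norm_apply_two_two (hγ : γ ∈ Bp p) : ‖γ 2 2‖ = 1 := by
  obtain ⟨hint, ⟨μ, hμ, hrel⟩, h10, h20, h30, -, -, -⟩ := hγ
  refine norm_eq_one_of_mul_eq_add (hint 2 2) (hint 0 0) hμ ?_ (similitude_diag_entries hrel).2
  refine lt_of_le_of_lt ?_ (Padic.natCast_inv_lt_one (p := p))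
  exact norm_sub_le_of_le (norm_add_le_of_le
    (norm_mul_le_of_le_of_norm_le_one h20 (hint 0 2))
    (norm_mul_le_of_le_of_norm_le_one h30 (hint 1 2)))
    (norm_mul_le_of_le_of_norm_le_one h10 (hint 3 2))

theorem norm_minor_eq_one (hγ : γ ∈ Bp p) : ‖γ 1 1 * γ 2 2 - γ 1 2 * γ 2 1‖ = 1 := by
  have hdiag : ‖γ 1 1 * γ 2 2‖ = 1 := by
    rw [norm_mul, norm_apply_one_one hγ, norm_apply_two_two hγ, one_mul]
  obtain ⟨hint, -, -, -, -, h21, -, -⟩ := hγ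
  have small : ‖-(γ 1 2 * γ 2 1)‖ < ‖γ 1 1 * γ 2 2‖ := by
    rw [norm_neg, hdiag]
    exact (norm_mul_le_of_norm_le_one_of_le (hint 1 2) h21).trans_lt Padic.natCast_inv_lt_one
  rw [sub_eq_add_neg, norm_add_eq_left_of_lt small, hdiag]

theorem norm_minor_le (hγ : γ ∈ Bp p) : ‖γ 1 1 * γ 2 0 - γ 1 0 * γ 2 1‖ ≤ (p : ℝ)⁻¹ := by
  obtain ⟨hint, -, h10, h20, -, -, -, -⟩ := hγ
  exact norm_sub_le_of_le (norm_mul_le_of_norm_le_one_of_le (hint 1 1) h20)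
    (norm_mul_le_of_le_of_norm_le_one h10 (hint 2 1))

theorem block_mem_Gamma0 (hγ : γ ∈ Bp p) : !![-γ 2 2, γ 1 2; -γ 2 1, γ 1 1] ∈ Gamma0 p := by
  have hdet := norm_minor_eq_one hγ
  obtain ⟨hint, -, -, -, -, h21, -, -⟩ := hγ
  refine ⟨fun i j => ?_, ?_, by simpa using h21⟩
  · fin_cases i <;> fin_cases j <;> simp [hint]
  · rw [Matrix.det_fin_two_of, ← hdet, ← norm_neg]
    ring_nf

end Bp

theorem Gamma0.smul_mem {c : ℚ_[p]} (hc : ‖c‖ = 1) {M : Matrix (Fin 2) (Fin 2) ℚ_[p]}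
    (hM : M ∈ Gamma0 p) : c • M ∈ Gamma0 p := by
  obtain ⟨hint, hdet, h10⟩ := hM
  exact ⟨fun i j => by simp [norm_mul, hc, hint], by simp [hc, hdet], by simp [norm_mul, hc, h10]⟩

section Factorization

variable {x y z : ℚ_[p]} {q γ : Matrix (Fin 4) (Fin 4) ℚ_[p]}

theorem norm_bounds_of_relations (hγ : γ ∈ Bp p)
    (h12 : γ 1 2 = x * γ 1 0 + y * γ 1 1) (h22 : γ 2 2 = x * γ 2 0 + y * γ 2 1)
    (h13 : γ 1 3 = y * γ 1 0 + z * γ 1 1) (h23 : γ 2 3 = y * γ 2 0 + z * γ 2 1) :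
    (p : ℝ) ≤ ‖x‖ ∧ (p : ℝ) * ‖y‖ ≤ ‖x‖ ∧ ‖x * z - y ^ 2‖ ≤ ‖x‖ := by
  have hp : (0 : ℝ) < p := mod_cast (Fact.out : p.Prime).pos
  set e := γ 1 1 * γ 2 0 - γ 1 0 * γ 2 1 with he
  have hxe : ‖x‖ * ‖e‖ = 1 := by
    rw [← norm_mul, ← Bp.norm_minor_eq_one hγ, h12, h22, he]
    ring_nf
  have hxp : 1 ≤ ‖x‖ * (p : ℝ)⁻¹ :=
    hxe ▸ mul_le_mul_of_nonneg_left (Bp.norm_minor_le hγ) (norm_nonneg x)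
  have h11 := Bp.norm_apply_one_one hγ
  obtain ⟨hint, -, h10, -, -, -, -, -⟩ := hγ
  refine ⟨by rwa [le_mul_inv_iff₀ hp, one_mul] at hxp, ?_, ?_⟩
  · have hy : ‖y‖ = ‖γ 1 2 - x * γ 1 0‖ := by
      rw [h12, add_sub_cancel_left, norm_mul, h11, mul_one]
    have : ‖y‖ ≤ ‖x‖ * (p : ℝ)⁻¹ := hy ▸ norm_sub_le_of_le ((hint 1 2).trans hxp)
      (by rw [norm_mul]; exact mul_le_mul_of_nonneg_left h10 (norm_nonneg x))
    rwa [le_mul_inv_iff₀ hp, mul_comm] at this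
  · have hde : ‖x * z - y ^ 2‖ * ‖e‖ ≤ 1 := by
      rw [← norm_mul, show (x * z - y ^ 2) * e = γ 2 2 * γ 1 3 - γ 1 2 * γ 2 3 by
        rw [h12, h13, h22, h23]; ring]
      exact norm_sub_le_of_le (norm_mul_le_of_le_of_norm_le_one (hint 2 2) (hint 1 3))
        (norm_mul_le_of_le_of_norm_le_one (hint 1 2) (hint 2 3))
    calc ‖x * z - y ^ 2‖ = ‖x * z - y ^ 2‖ * ‖e‖ * ‖x‖ := by
          rw [mul_assoc, mul_comm ‖e‖, hxe, mul_one]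
      _ ≤ ‖x‖ := mul_le_of_le_one_left (norm_nonneg x) hde

theorem norm_bounds_of_factorization (hq : q ∈ PS p) (hγ : γ ∈ Bp p)
    (hfac : s2 p * s1 p * s2 p * nS p x y z = q * (s2 p * γ)) :
    (p : ℝ) ≤ ‖x‖ ∧ (p : ℝ) * ‖y‖ ≤ ‖x‖ ∧ ‖x * z - y ^ 2‖ ≤ ‖x‖ := by
  obtain ⟨μ, hμ, hrel⟩ := hγ.2.1
  obtain ⟨⟨h12, h22, h13, h23⟩, -⟩ :=
    factorization_relations (norm_ne_zero_iff.mp (hμ ▸ one_ne_zero)) hrel hfac hq.2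
  exact norm_bounds_of_relations hγ h12 h22 h13 h23

theorem ne_zero_of_natCast_le_norm (hx : (p : ℝ) ≤ ‖x‖) : x ≠ 0 :=
  norm_pos_iff.mp ((Nat.cast_pos.mpr (Fact.out : p.Prime).pos).trans_le hx)

theorem exists_m2S_eq_mul_Gamma0 (hq : q ∈ PS p) (hγ : γ ∈ Bp p)
    (hfac : s2 p * s1 p * s2 p * nS p x y z = q * (s2 p * γ)) :
    ∃ γ' ∈ Gamma0 p, m2S p q = !![0, 1; x⁻¹, -(y / x)] * γ' := by
  have hx := ne_zero_of_natCast_le_norm (norm_bounds_of_factorization hq hγ hfac).1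
  obtain ⟨μ, hμ, hrel⟩ := hγ.2.1
  have hμ0 : μ ≠ 0 := norm_ne_zero_iff.mp (hμ ▸ one_ne_zero)
  obtain ⟨⟨h12, h22, -, -⟩, hm⟩ := factorization_relations hμ0 hrel hfac hq.2
  have hblock : !![0, 1; x⁻¹, -(y / x)] * !![-γ 2 2, γ 1 2; -γ 2 1, γ 1 1] =
      !![-γ 2 1, γ 1 1; -γ 2 0, γ 1 0] := by
    ext i j
    fin_cases i <;> fin_cases j <;> simp [Matrix.mul_apply, h12, h22] <;> field_simp <;> ring
  refine ⟨μ⁻¹ • _, Gamma0.smul_mem (by rw [norm_inv, hμ, inv_one]) (Bp.block_mem_Gamma0 hγ), ?_⟩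
  rw [Matrix.mul_smul, hblock, ← hm, smul_smul, inv_mul_cancel₀ hμ0, one_smul]

noncomputable def parabolicWitness (x y : ℚ_[p]) : Matrix (Fin 4) (Fin 4) ℚ_[p] :=
  !![0, 1, 0, 0; x⁻¹, -(y / x), 1, 0; 0, 0, -y, -1; 0, 0, -x, 0]

noncomputable def iwahoriWitness (x y z : ℚ_[p]) : Matrix (Fin 4) (Fin 4) ℚ_[p] :=
  !![-1, 0, 0, 0; y / x, -1, 0, -((x * z - y ^ 2) / x); x⁻¹, 0, 1, y / x; 0, 0, 0, 1]

theorem parabolicWitness_similitude (hx : x ≠ 0) :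
    (parabolicWitness x y)ᵀ * J4 p * parabolicWitness x y = (-1 : ℚ_[p]) • J4 p := by
  ext i j
  fin_cases i <;> fin_cases j <;>
    simp [parabolicWitness, J4, Matrix.mul_apply, Fin.sum_univ_four] <;> field_simp <;> ring

theorem iwahoriWitness_similitude :
    (iwahoriWitness x y z)ᵀ * J4 p * iwahoriWitness x y z = (-1 : ℚ_[p]) • J4 p := by
  ext i j
  fin_cases i <;> fin_cases j <;>
    simp [iwahoriWitness, J4, Matrix.mul_apply, Fin.sum_univ_four]

theorem s2_mul_s1_mul_s2_mul_nS_eq_witnesses (hx : x ≠ 0) :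
    s2 p * s1 p * s2 p * nS p x y z =
      parabolicWitness x y * (s2 p * iwahoriWitness x y z) := by
  rw [s2_mul_s1_mul_s2_mul_nS]
  ext i j
  fin_cases i <;> fin_cases j <;>
    simp [parabolicWitness, iwahoriWitness, s2, Matrix.mul_apply, Fin.sum_univ_four] <;>
    field_simp <;> ring

theorem parabolicWitness_mem_PS (hx : x ≠ 0) : parabolicWitness x y ∈ PS p :=
  ⟨mem_GSp4_of_similitude (neg_ne_zero.mpr one_ne_zero) (parabolicWitness_similitude hx),
    by simp [parabolicWitness]⟩

theorem iwahoriWitness_mem_Bp (hx : (p : ℝ) ≤ ‖x‖) (hy : (p : ℝ) * ‖y‖ ≤ ‖x‖)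
    (hd : ‖x * z - y ^ 2‖ ≤ ‖x‖) : iwahoriWitness x y z ∈ Bp p := by
  have hp : (0 : ℝ) < p := mod_cast (Fact.out : p.Prime).pos
  have hx0 : (0 : ℝ) < ‖x‖ := hp.trans_le hx
  have hinv : ‖x‖⁻¹ ≤ (p : ℝ)⁻¹ := inv_anti₀ hp hx
  have hyx : ‖y‖ / ‖x‖ ≤ (p : ℝ)⁻¹ := by
    rw [div_le_iff₀ hx0, ← div_eq_inv_mul, le_div_iff₀ hp, mul_comm]
    exact hy
  have hdx : ‖x * z - y ^ 2‖ / ‖x‖ ≤ 1 := (div_le_one hx0).mpr hd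
  have hsmall := (Padic.natCast_inv_lt_one (p := p)).le
  refine ⟨fun i j => ?_, ⟨-1, by simp, iwahoriWitness_similitude⟩, ?_⟩
  · fin_cases i <;> fin_cases j <;> simp [iwahoriWitness] <;> linarith
  · simp [iwahoriWitness, hinv, hyx]

theorem exists_factorization_of_norm_bounds (hx : (p : ℝ) ≤ ‖x‖)
    (hy : (p : ℝ) * ‖y‖ ≤ ‖x‖) (hd : ‖x * z - y ^ 2‖ ≤ ‖x‖) :
    ∃ q ∈ PS p, ∃ γ ∈ Bp p, s2 p * s1 p * s2 p * nS p x y z = q * (s2 p * γ) :=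
  ⟨_, parabolicWitness_mem_PS (ne_zero_of_natCast_le_norm hx), _,
    iwahoriWitness_mem_Bp hx hy hd,
    s2_mul_s1_mul_s2_mul_nS_eq_witnesses (ne_zero_of_natCast_le_norm hx)⟩

end Factorization

end

theorem stmt_10_general (p : ℕ) [Fact p.Prime] (x y z : ℚ_[p]) :
    ((∃ q ∈ PS p, ∃ γ ∈ Bp p, s2 p * s1 p * s2 p * nS p x y z = q * (s2 p * γ)) ↔
      Padic.addValuation x ≤
        min ((-1 : ℤ) : WithTop ℤ)
          (min (Padic.addValuation y - 1) (Padic.addValuation (x * z - y ^ 2)))) ∧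
    (∀ q γ : Matrix (Fin 4) (Fin 4) ℚ_[p], q ∈ PS p → γ ∈ Bp p →
      s2 p * s1 p * s2 p * nS p x y z = q * (s2 p * γ) →
      ∃ γ' ∈ Gamma0 p, m2S p q = !![0, 1; x⁻¹, -(y / x)] * γ') := by
  rw [Padic.addValuation_le_min_iff]
  exact ⟨⟨fun ⟨_, hq, _, hγ, hfac⟩ => norm_bounds_of_factorization hq hγ hfac,
    fun ⟨hx, hy, hd⟩ => exists_factorization_of_norm_bounds hx hy hd⟩,
    fun _ _ hq hγ hfac => exists_m2S_eq_mul_Gamma0 hq hγ hfac⟩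

/-- Assume `y ≠ 0`, `z ≠ 0`, `xz − y² ≠ 0`.  Then
`σ·n ∈ P_S(ℚ_p)·s₂·B(p)` iff `v_p(x) ≤ min{−1, v_p(y) − 1, v_p(xz−y²)}` (here `σ = s₂s₁s₂`
and `n` is the unipotent matrix attached to `(x,y,z)`); moreover in that case any
factorization `σ·n = q·s₂·γ` with `q ∈ P_S(ℚ_p)`, `γ ∈ B(p)` satisfies
`m₂(q) ∈ [[0, 1],[x⁻¹, −y/x]]·Γ₀(p)`. -/
theorem stmt_10 (p : ℕ) [Fact p.Prime] (x y z : ℚ_[p])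
    (hy : y ≠ 0) (hz : z ≠ 0) (hdet : x * z - y ^ 2 ≠ 0) :
    ((∃ q ∈ PS p, ∃ γ ∈ Bp p, s2 p * s1 p * s2 p * nS p x y z = q * (s2 p * γ)) ↔
      Padic.addValuation x ≤
        min ((-1 : ℤ) : WithTop ℤ)
          (min (Padic.addValuation y - 1) (Padic.addValuation (x * z - y ^ 2)))) ∧
    (∀ q γ : Matrix (Fin 4) (Fin 4) ℚ_[p], q ∈ PS p → γ ∈ Bp p →
      s2 p * s1 p * s2 p * nS p x y z = q * (s2 p * γ) →
      ∃ γ' ∈ Gamma0 p, m2S p q = !![0, 1; x⁻¹, -(y / x)] * γ') :=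
  stmt_10_general p x y z
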